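/- For every n ∈ ℕ and every θ ∈ ℝ, the Legendre polynomial evaluated at cos θ has the finite trigonometric expansion P_n(cos θ) = ∑_{q=0}^{n} F̃_{q,n} · cos((n - 2q)·θ). -/

import Mathlib

/-!
Writing `cos θ = (e^{iθ} + e^{-iθ})/2`, the binomial theorem gives
`cos^m θ = 2^{-m} ∑_j C(m, j) cos((m - 2j)θ)`. Collecting the frequency `n - 2q` in
`P_n(cos θ)`, with `q = k + j`, the coefficient of `cos((n - 2q)θ)` becomes `4^{-n}` times
`∑_k (-4)^k (2(q+m-k))! / (k! (q+m-k)! (q-k)! (m-k)!)` with `m = n - q`. This sum equals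
`C(2q, q) C(2m, m)`: in `q` it satisfies the recurrence `(q+1) a_{q+1} = 2(2q+1) a_q` of the
central binomial coefficients, which a Zeilberger certificate reduces to a telescoping sum in `k`.
-/

noncomputable section

/-- the Legendre polynomial P_n(ξ) = ∑_{k=0}^{⌊n/2⌋} p_{n,k} ξ^{n-2k} -/
def legP (n : ℕ) (ξ : ℝ) : ℝ :=
  ∑ k ∈ Finset.range (n / 2 + 1),
    ((-1 : ℝ) ^ k / 2 ^ n) * (Nat.factorial (2 * n - 2 * k) : ℝ) /
      ((Nat.factorial k : ℝ) * (Nat.factorial (n - k) : ℝ) * (Nat.factorial (n - 2 * k) : ℝ)) *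
      ξ ^ (n - 2 * k)

/-- F̃_{q,n} = (2q)!(2n-2q)! / (2^{2n} (q!)² ((n-q)!)²) -/
def Ftil (q n : ℕ) : ℝ :=
  ((Nat.factorial (2 * q) : ℝ) * (Nat.factorial (2 * n - 2 * q) : ℝ)) /
    (2 ^ (2 * n) * (Nat.factorial q : ℝ) ^ 2 * (Nat.factorial (n - q) : ℝ) ^ 2)

open Finset Nat

theorem Nat.cast_centralBinom (n : ℕ) : (centralBinom n : ℝ) = (2 * n)! / (n ! * n !) := by
  rw [centralBinom_eq_two_mul_choose, Nat.cast_choose ℝ (by omega), two_mul, Nat.add_sub_cancel]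

theorem Real.cos_pow_eq_sum (θ : ℝ) (m : ℕ) :
    Real.cos θ ^ m =
      ∑ j ∈ range (m + 1), (m.choose j : ℝ) / 2 ^ m * Real.cos ((m - 2 * j : ℝ) * θ) := by
  have hexp : (((2 * Real.cos θ) ^ m : ℝ) : ℂ) =
      ∑ j ∈ range (m + 1),
        Complex.exp (((m - 2 * j : ℝ) * θ : ℝ) * Complex.I) * ((m.choose j : ℝ) : ℂ) := by
    push_cast
    rw [Complex.two_cos, add_comm, add_pow]
    refine sum_congr rfl fun j hj => ?_
    rw [← Complex.exp_nat_mul, ← Complex.exp_nat_mul, ← Complex.exp_add]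
    push_cast [Nat.cast_sub (mem_range_succ_iff.mp hj)]
    ring_nf
  have hre := congrArg Complex.re hexp
  simp only [Complex.ofReal_re, Complex.re_sum, Complex.re_mul_ofReal,
    Complex.exp_ofReal_mul_I_re] at hre
  rw [show Real.cos θ ^ m = (2 * Real.cos θ) ^ m / 2 ^ m by rw [mul_pow]; field_simp, hre, sum_div]
  exact sum_congr rfl fun j _ => by ring

theorem sum_range_sum_range_add_eq {M : Type*} [AddCommMonoid M] (n : ℕ) (f : ℕ → ℕ → M) :
    ∑ k ∈ range (n / 2 + 1), ∑ j ∈ range (n - 2 * k + 1), f k (k + j) =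
      ∑ q ∈ range (n + 1), ∑ k ∈ range (min q (n - q) + 1), f k q := by
  have hIco : ∀ k ∈ range (n / 2 + 1),
      ∑ j ∈ range (n - 2 * k + 1), f k (k + j) = ∑ q ∈ Ico k (n - k + 1), f k q := by
    intro k hk
    rw [sum_Ico_eq_sum_range, show n - k + 1 - k = n - 2 * k + 1 by grind]
  rw [sum_congr rfl hIco]
  refine sum_comm' fun k q => ?_
  simp only [mem_range, mem_Ico]
  omega

def centralBinomMulTerm (q m k : ℕ) : ℝ :=
  (-4) ^ k * ((2 * (q + m - k))! : ℝ) / (k ! * (q + m - k)! * (q - k)! * (m - k)!)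

-- Found by Zeilberger's algorithm.
def centralBinomMulCert (q m k : ℕ) : ℝ :=
  -2 * k * (2 * (q + m - k) + 1) * (-4) ^ k * ((2 * (q + m - k))! : ℝ) /
    (k ! * (q + m - k)! * (q + 1 - k)! * (m - k)!)

theorem succ_mul_centralBinomMulTerm_succ {q m k : ℕ} (hk : k ≤ q) (hqm : q < m) :
    (q + 1) * centralBinomMulTerm (q + 1) m k =
      2 * (2 * q + 1) * centralBinomMulTerm q m k +
        (centralBinomMulCert q m (k + 1) - centralBinomMulCert q m k) := by
  obtain ⟨i, rfl⟩ : ∃ i, q = k + i := ⟨q - k, by omega⟩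
  obtain ⟨j, rfl⟩ : ∃ j, m = k + i + 1 + j := ⟨m - (k + i) - 1, by omega⟩
  obtain ⟨s, hs⟩ : ∃ s, s = k + 2 * i + j := ⟨_, rfl⟩
  simp only [centralBinomMulTerm, centralBinomMulCert,
    show k + i + 1 + (k + i + 1 + j) - k = s + 2 by omega,
    show k + i + (k + i + 1 + j) - k = s + 1 by omega,
    show k + i + (k + i + 1 + j) - (k + 1) = s by omega,
    show k + i + 1 - k = i + 1 by omega, show k + i - k = i by omega,
    show k + i + 1 - (k + 1) = i by omega,
    show k + i + 1 + j - k = i + j + 1 by omega, show k + i + 1 + j - (k + 1) = i + j by omega,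
    show 2 * (s + 2) = 2 * s + 4 by ring, show 2 * (s + 1) = 2 * s + 2 by ring]
  push_cast [Nat.factorial_succ, hs]
  field_simp
  ring

theorem succ_mul_centralBinomMulTerm_self_succ {q m : ℕ} (hqm : q < m) :
    (q + 1) * centralBinomMulTerm (q + 1) m (q + 1) = -centralBinomMulCert q m (q + 1) := by
  obtain ⟨j, rfl⟩ : ∃ j, m = q + 1 + j := ⟨m - q - 1, by omega⟩
  simp only [centralBinomMulTerm, centralBinomMulCert,
    show q + 1 + (q + 1 + j) - (q + 1) = q + j + 1 by omega,
    show q + (q + 1 + j) - (q + 1) = q + j by omega, show q + 1 + j - (q + 1) = j by omega,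
    Nat.sub_self, show 2 * (q + j + 1) = 2 * (q + j) + 2 by ring]
  push_cast [Nat.factorial_succ]
  field_simp
  ring

theorem centralBinomMulCert_zero (q m : ℕ) : centralBinomMulCert q m 0 = 0 := by
  simp [centralBinomMulCert]

theorem sum_centralBinomMulTerm_of_le {q m : ℕ} (hqm : q ≤ m) :
    ∑ k ∈ range (q + 1), centralBinomMulTerm q m k = centralBinom q * centralBinom m := by
  induction q with
  | zero => simp [centralBinomMulTerm, cast_centralBinom]
  | succ q ih =>
    have hqm' : q < m := hqm
    refine mul_left_cancel₀ (show (q + 1 : ℝ) ≠ 0 by positivity) ?_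
    calc (q + 1 : ℝ) * ∑ k ∈ range (q + 1 + 1), centralBinomMulTerm (q + 1) m k
        = ∑ k ∈ range (q + 1), (2 * (2 * q + 1) * centralBinomMulTerm q m k +
            (centralBinomMulCert q m (k + 1) - centralBinomMulCert q m k)) -
              centralBinomMulCert q m (q + 1) := by
          rw [sum_range_succ, mul_add, mul_sum, succ_mul_centralBinomMulTerm_self_succ hqm',
            sum_congr rfl fun k hk =>
              succ_mul_centralBinomMulTerm_succ (mem_range_succ_iff.mp hk) hqm', sub_eq_add_neg]
      _ = 2 * (2 * q + 1) * ∑ k ∈ range (q + 1), centralBinomMulTerm q m k := by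
          rw [sum_add_distrib, sum_range_sub, centralBinomMulCert_zero, mul_sum]
          ring
      _ = (q + 1 : ℝ) * (centralBinom (q + 1) * centralBinom m) := by
          rw [ih hqm'.le, ← mul_assoc, ← mul_assoc]
          exact_mod_cast congrArg (· * centralBinom m) (succ_mul_centralBinom_succ q).symm

theorem centralBinomMulTerm_comm (q m k : ℕ) :
    centralBinomMulTerm q m k = centralBinomMulTerm m q k := by
  simp only [centralBinomMulTerm, add_comm q m]
  ring

theorem sum_centralBinomMulTerm (q m : ℕ) :
    ∑ k ∈ range (min q m + 1), centralBinomMulTerm q m k = centralBinom q * centralBinom m := by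
  rcases le_total q m with h | h
  · rw [min_eq_left h, sum_centralBinomMulTerm_of_le h]
  · simp_rw [min_eq_right h, centralBinomMulTerm_comm q, sum_centralBinomMulTerm_of_le h, mul_comm]

def legendreCoeff (n k : ℕ) : ℝ :=
  (-1) ^ k / 2 ^ n * ((2 * n - 2 * k)! : ℝ) / (k ! * (n - k)! * (n - 2 * k)!)

theorem legP_eq_sum (n : ℕ) (ξ : ℝ) :
    legP n ξ = ∑ k ∈ range (n / 2 + 1), legendreCoeff n k * ξ ^ (n - 2 * k) := rfl

theorem legendreCoeff_mul_choose {n q k : ℕ} (hkq : k ≤ q) (hqn : q + k ≤ n) :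
    legendreCoeff n k * ((n - 2 * k).choose (q - k) / 2 ^ (n - 2 * k)) =
      centralBinomMulTerm q (n - q) k / 4 ^ n := by
  obtain ⟨i, rfl⟩ : ∃ i, q = k + i := ⟨q - k, by omega⟩
  obtain ⟨j, rfl⟩ : ∃ j, n = 2 * k + i + j := ⟨n - (k + i) - k, by omega⟩
  simp only [legendreCoeff, centralBinomMulTerm,
    show 2 * k + i + j - 2 * k = i + j by omega, show k + i - k = i by omega,
    show 2 * k + i + j - (k + i) = k + j by omega, show k + i + (k + j) - k = k + i + j by omega,
    show 2 * (2 * k + i + j) - 2 * k = 2 * (k + i + j) by omega,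
    show 2 * k + i + j - k = k + i + j by omega, show k + j - k = j by omega,
    Nat.cast_choose ℝ (show i ≤ i + j by omega), Nat.add_sub_cancel_left]
  rw [neg_pow (4 : ℝ), show (4 : ℝ) = 2 * 2 by norm_num, mul_pow, mul_pow]
  field_simp
  ring

theorem Ftil_eq_centralBinom_mul_div {q n : ℕ} (hqn : q ≤ n) :
    Ftil q n = centralBinom q * centralBinom (n - q) / 4 ^ n := by
  rw [Ftil, cast_centralBinom, cast_centralBinom, show 2 * (n - q) = 2 * n - 2 * q by omega,
    show (4 : ℝ) ^ n = 2 ^ (2 * n) by rw [pow_mul]; norm_num]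
  field_simp

/-- the finite trigonometric expansion of the Legendre polynomial,
P_n(cos θ) = ∑_{q=0}^n F̃_{q,n} cos((n-2q)θ). -/
theorem legendre_cos_expansion (n : ℕ) (θ : ℝ) :
    legP n (Real.cos θ) =
      ∑ q ∈ Finset.range (n + 1), Ftil q n * Real.cos (((n : ℝ) - 2 * q) * θ) := by
  set c : ℕ → ℕ → ℝ := fun k q =>
    legendreCoeff n k * ((n - 2 * k).choose (q - k) / 2 ^ (n - 2 * k))
  have hcos : ∀ k ∈ range (n / 2 + 1), legendreCoeff n k * Real.cos θ ^ (n - 2 * k) =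
      ∑ j ∈ range (n - 2 * k + 1), c k (k + j) * Real.cos (((n : ℝ) - 2 * (k + j : ℕ)) * θ) := by
    intro k hk
    rw [Real.cos_pow_eq_sum, mul_sum]
    refine sum_congr rfl fun j _ => ?_
    have hfreq : ((n - 2 * k : ℕ) : ℝ) - 2 * j = n - 2 * (k + j : ℕ) := by
      push_cast [Nat.cast_sub (by grind : 2 * k ≤ n)]
      ring
    rw [hfreq, ← mul_assoc]
    simp only [c, add_tsub_cancel_left]
  calc legP n (Real.cos θ)
      = ∑ k ∈ range (n / 2 + 1), ∑ j ∈ range (n - 2 * k + 1),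
          c k (k + j) * Real.cos (((n : ℝ) - 2 * (k + j : ℕ)) * θ) := by
        rw [legP_eq_sum]; exact sum_congr rfl hcos
    _ = ∑ q ∈ range (n + 1), ∑ k ∈ range (min q (n - q) + 1),
          c k q * Real.cos (((n : ℝ) - 2 * q) * θ) :=
        sum_range_sum_range_add_eq n fun k q => c k q * Real.cos (((n : ℝ) - 2 * q) * θ)
    _ = _ := by
      refine sum_congr rfl fun q hq => ?_
      have hqn := mem_range_succ_iff.mp hq
      rw [← sum_mul, sum_congr rfl fun k hk => legendreCoeff_mul_choose (by grind) (by grind),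
        ← sum_div, sum_centralBinomMulTerm, Ftil_eq_centralBinom_mul_div hqn]

end
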